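/- arXiv:1706.03698 — 7 statements merged into one kernel-verified Lean document; each statement's English description precedes it below -/
import Mathlib

section
/- Let T be an out-tree with k ≥ 0 internal vertices (vertices of out-degree at least 1). Then T has a matching of size at least k/2. -/
/-!
Delete-a-leaf induction. In a finite acyclic arc set in which every vertex has at most one
incoming arc, take an internal vertex `m` none of whose descendants is internal, and an arc
`m → w`; then `w` is a leaf. Deleting every arc at `m` destroys at most two internal vertices,
`m` and its parent, and leaves no arc at `w`, so `m → w` can be added to a matching of the rest.
-/

open Finset Relation

namespace ArcSet

variable {V : Type*}

def IsArcMatching (M : Finset (V × V)) : Prop :=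
  ∀ e ∈ M, ∀ f ∈ M, e ≠ f → e.1 ≠ f.1 ∧ e.1 ≠ f.2 ∧ e.2 ≠ f.1 ∧ e.2 ≠ f.2

def InDegreeLeOne (A : Finset (V × V)) : Prop :=
  ∀ ⦃u u' v : V⦄, (u, v) ∈ A → (u', v) ∈ A → u = u'

def IsAcyclic (A : Finset (V × V)) : Prop :=
  ∀ v : V, ¬ TransGen (fun a b => (a, b) ∈ A) v v

theorem InDegreeLeOne.mono {A B : Finset (V × V)} (hA : InDegreeLeOne A) (hBA : B ⊆ A) :
    InDegreeLeOne B :=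
  fun _ _ _ hu hu' => hA (hBA hu) (hBA hu')

theorem IsAcyclic.mono {A B : Finset (V × V)} (hA : IsAcyclic A) (hBA : B ⊆ A) :
    IsAcyclic B :=
  fun v hv => hA v (TransGen.mono (fun _ _ h => hBA h) v v hv)

section DecidableEq

variable [DecidableEq V]

/-- The internal vertices. -/
def tails (A : Finset (V × V)) : Finset V := A.image Prod.fst

def deleteVertex (A : Finset (V × V)) (m : V) : Finset (V × V) :=
  A.filter fun e => e.1 ≠ m ∧ e.2 ≠ m

theorem mem_tails {A : Finset (V × V)} {v : V} : v ∈ tails A ↔ ∃ w, (v, w) ∈ A := by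
  simp [tails]

theorem deleteVertex_subset (A : Finset (V × V)) (m : V) : deleteVertex A m ⊆ A :=
  filter_subset _ _

theorem IsArcMatching.insert {M : Finset (V × V)} (hM : IsArcMatching M) {e : V × V}
    (he : ∀ f ∈ M, f.1 ≠ e.1 ∧ f.2 ≠ e.1 ∧ f.1 ≠ e.2 ∧ f.2 ≠ e.2) :
    IsArcMatching (insert e M) := by
  intro f hf g hg hfg
  rcases mem_insert.mp hf with rfl | hfM <;> rcases mem_insert.mp hg with rfl | hgM
  · exact absurd rfl hfg
  · obtain ⟨h1, h2, h3, h4⟩ := he g hgM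
    exact ⟨h1.symm, h2.symm, h3.symm, h4.symm⟩
  · obtain ⟨h1, h2, h3, h4⟩ := he f hfM
    exact ⟨h1, h3, h2, h4⟩
  · exact hM f hfM g hgM hfg

theorem IsAcyclic.exists_arc_head_notMem_tails {A : Finset (V × V)} (hA : IsAcyclic A)
    (hne : A.Nonempty) : ∃ m w, (m, w) ∈ A ∧ w ∉ tails A := by
  let below : V → V → Prop := fun a b => TransGen (fun a b => (a, b) ∈ A) b a
  have : IsStrictOrder V below :=
    { irrefl := hA, trans := fun _ _ _ hab hbc => hbc.trans hab }
  have hwf := Set.wellFoundedOn_iff.mp ((tails A : Set V).toFinite.wellFoundedOn (r := below))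
  obtain ⟨e, he⟩ := hne
  obtain ⟨m, hm, hmin⟩ :=
    hwf.has_min (tails A : Set V) ⟨e.1, mem_coe.mpr (mem_image_of_mem _ he)⟩
  obtain ⟨w, hmw⟩ := mem_tails.mp (mem_coe.mp hm)
  exact ⟨m, w, hmw, fun hw => hmin w hw ⟨.single hmw, hw, hm⟩⟩

theorem card_tails_le_card_tails_deleteVertex_add_two {A : Finset (V × V)}
    (hA : InDegreeLeOne A) (m : V) :
    #(tails A) ≤ #(tails (deleteVertex A m)) + 2 := by
  set parents := (A.filter fun e => e.2 = m).image Prod.fst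
  have hparents : #parents ≤ 1 := by
    refine card_le_one.mpr fun u hu u' hu' => ?_
    simp only [parents, mem_image, mem_filter] at hu hu'
    obtain ⟨⟨_, v⟩, ⟨huv, rfl⟩, rfl⟩ := hu
    obtain ⟨⟨_, _⟩, ⟨hu'v, rfl⟩, rfl⟩ := hu'
    exact hA huv hu'v
  have hsub : tails A ⊆ insert m (parents ∪ tails (deleteVertex A m)) := by
    intro u hu
    obtain ⟨v, huv⟩ := mem_tails.mp hu
    by_cases hum : u = m
    · exact mem_insert.mpr (.inl hum)
    by_cases hvm : v = m
    · subst hvm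
      exact mem_insert_of_mem (mem_union_left _ (mem_image.mpr ⟨(u, v), by simp [huv], rfl⟩))
    · exact mem_insert_of_mem (mem_union_right _
        (mem_tails.mpr ⟨v, mem_filter.mpr ⟨huv, hum, hvm⟩⟩))
  calc #(tails A) ≤ #(insert m (parents ∪ tails (deleteVertex A m))) := card_le_card hsub
    _ ≤ #(parents ∪ tails (deleteVertex A m)) + 1 := card_insert_le _ _
    _ ≤ #parents + #(tails (deleteVertex A m)) + 1 := by grw [card_union_le]
    _ ≤ #(tails (deleteVertex A m)) + 2 := by omega

theorem exists_isArcMatching_card_tails_le (A : Finset (V × V)) (hin : InDegreeLeOne A)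
    (hacyc : IsAcyclic A) : ∃ M ⊆ A, IsArcMatching M ∧ #(tails A) ≤ 2 * #M := by
  induction A using Finset.strongInduction with
  | H A ih =>
  rcases A.eq_empty_or_nonempty with rfl | hne
  · exact ⟨∅, empty_subset _, by simp [IsArcMatching], by simp [tails]⟩
  obtain ⟨m, w, hmw, hw⟩ := hacyc.exists_arc_head_notMem_tails hne
  set A' := deleteVertex A m
  have hA'A : A' ⊆ A := deleteVertex_subset A m
  have hA'ssA : A' ⊂ A := ssubset_of_subset_of_ne hA'A fun h => by
    have hmw' : (m, w) ∈ A' := h ▸ hmw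
    simp [A', deleteVertex] at hmw'
  obtain ⟨M, hMA', hM, hcard⟩ := ih A' hA'ssA (hin.mono hA'A) (hacyc.mono hA'A)
  have havoid : ∀ f ∈ M, f.1 ≠ m ∧ f.2 ≠ m ∧ f.1 ≠ w ∧ f.2 ≠ w := by
    intro f hf
    obtain ⟨hfA, hf1, hf2⟩ := mem_filter.mp (hMA' hf)
    refine ⟨hf1, hf2, fun h => hw (mem_tails.mpr ⟨f.2, h ▸ hfA⟩), fun h => hf1 ?_⟩
    exact hin (show (f.1, w) ∈ A from h ▸ hfA) hmw
  have hnotMem : (m, w) ∉ M := fun h => (havoid _ h).1 rfl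
  refine ⟨insert (m, w) M, insert_subset hmw (hMA'.trans hA'A), hM.insert havoid, ?_⟩
  rw [card_insert_of_notMem hnotMem]
  have hlost : #(tails A) ≤ #(tails A') + 2 :=
    card_tails_le_card_tails_deleteVertex_add_two hin m
  omega

theorem card_tails_eq_natCard (A : Finset (V × V)) :
    #(tails A) = Nat.card {v : V // ∃ w : V, (v, w) ∈ A} := by
  have hset : {v : V | ∃ w, (v, w) ∈ A} = (tails A : Set V) := by
    ext v
    simp [mem_tails]
  rw [← Set.ncard_coe_finset, ← hset]
  exact (Nat.card_coe_set_eq _).symm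

end DecidableEq

section OutTree

variable {A : Finset (V × V)} {r : V}

theorem inDegreeLeOne_of_existsUnique (hroot : ∀ u, (u, r) ∉ A)
    (hindeg : ∀ v, v ≠ r → ∃! u, (u, v) ∈ A) : InDegreeLeOne A := by
  intro u u' v hu hu'
  obtain ⟨_, _, huniq⟩ := hindeg v fun hv => hroot u (hv ▸ hu)
  rw [huniq u hu, huniq u' hu']

/-- A cycle through `v` would contain the parent of every vertex on it, so it would contain
every vertex on the path from `r` to `v`, including `r`, which has no parent. -/
theorem isAcyclic_of_reflTransGen (hroot : ∀ u, (u, r) ∉ A) (hin : InDegreeLeOne A)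
    (hreach : ∀ v, ReflTransGen (fun a b => (a, b) ∈ A) r v) : IsAcyclic A := by
  intro v
  induction hreach v with
  | refl =>
    intro hcyc
    obtain ⟨p, -, hpr⟩ := TransGen.tail'_iff.mp hcyc
    exact hroot p hpr
  | tail _ huv ih =>
    intro hcyc
    obtain ⟨p, hvp, hpv⟩ := TransGen.tail'_iff.mp hcyc
    obtain rfl := hin hpv huv
    exact ih (TransGen.head' hpv hvp)

end OutTree

end ArcSet

open ArcSet

theorem stmt_0_general {V : Type} (A : Finset (V × V)) (r : V)
    (hroot : ∀ u : V, (u, r) ∉ A)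
    (hindeg : ∀ v : V, v ≠ r → ∃! u : V, (u, v) ∈ A)
    (hreach : ∀ v : V, Relation.ReflTransGen (fun a b => (a, b) ∈ A) r v)
    (k : ℕ) (hk : k = Nat.card {v : V // ∃ w : V, (v, w) ∈ A}) :
    ∃ M : Finset (V × V), M ⊆ A ∧
      (∀ e ∈ M, ∀ f ∈ M, e ≠ f →
        e.1 ≠ f.1 ∧ e.1 ≠ f.2 ∧ e.2 ≠ f.1 ∧ e.2 ≠ f.2) ∧
      k ≤ 2 * M.card := by
  classical
  have hin := inDegreeLeOne_of_existsUnique hroot hindeg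
  obtain ⟨M, hMA, hM, hcard⟩ :=
    exists_isArcMatching_card_tails_le A hin (isAcyclic_of_reflTransGen hroot hin hreach)
  exact ⟨M, hMA, hM, hk ▸ card_tails_eq_natCard A ▸ hcard⟩

/-- An out-tree on vertex set `V` with arc set `A`, rooted at `r`: the root has in-degree
zero, every other vertex has in-degree exactly one, and every vertex is reachable from the
root. If it has `k` internal vertices (vertices of out-degree at least 1), then it has a
matching (a set of arcs, no two sharing a vertex) of size at least `k/2`. -/
theorem stmt_0 {V : Type} [Fintype V] (A : Finset (V × V)) (r : V)
    (hroot : ∀ u : V, (u, r) ∉ A)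
    (hindeg : ∀ v : V, v ≠ r → ∃! u : V, (u, v) ∈ A)
    (hreach : ∀ v : V, Relation.ReflTransGen (fun a b => (a, b) ∈ A) r v)
    (k : ℕ) (hk : k = Nat.card {v : V // ∃ w : V, (v, w) ∈ A}) :
    ∃ M : Finset (V × V), M ⊆ A ∧
      (∀ e ∈ M, ∀ f ∈ M, e ≠ f →
        e.1 ≠ f.1 ∧ e.1 ≠ f.2 ∧ e.2 ≠ f.1 ∧ e.2 ≠ f.2) ∧
      k ≤ 2 * M.card :=
  stmt_0_general A r hroot hindeg hreach k hk
end

section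
/- For every directed multigraph D on vertex set [n] and every vertex i ∈ [n], the determinant of the matrix K_{\bar{i}}(D), obtained from the symbolic Kirchhoff matrix K(D) by deleting its i-th row and i-th column, equals the sum over all out-branchings B of D rooted at i of the products ∏_{jk ∈ A(B)} x_{jk}. -/
/-!
Column `b` of the Kirchhoff matrix is `∑_{e ↦ b} x_e (δ_b - δ_{src e})`. Expanding the
determinant of the minor multilinearly in these columns gives a sum, over the choices `r` of one
entering arc per non-root vertex, of `∏_w x_{r w}` times `det (1 - P_r)`, where `P_r` is the
adjacency matrix of the parent relation `z ← w :↔ src (r w) = z`. When this relation is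
well-founded, a linear extension of it makes `1 - P_r` unitriangular, so the determinant is `1`;
otherwise the indicator of the non-accessible vertices is a kernel vector, so it is `0`. Finally,
the parent relation is well-founded exactly when the chosen arcs form an out-branching rooted
at `i`.
-/

open MvPolynomial

/-- `B` is an out-branching rooted at `r` of the directed multigraph with arcs `E`
(given by source and target maps): no arc of `B` enters `r`, every other vertex has exactly
one arc of `B` entering it, and every vertex is reachable from `r` along arcs of `B`. -/
def IsOutBranchingAt {n : ℕ} {E : Type} (src tgt : E → Fin n) (B : Finset E)
    (r : Fin n) : Prop :=
  (∀ e ∈ B, tgt e ≠ r) ∧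
  (∀ v : Fin n, v ≠ r → ∃! e : E, e ∈ B ∧ tgt e = v) ∧
  (∀ v : Fin n, Relation.ReflTransGen (fun a b => ∃ e ∈ B, src e = a ∧ tgt e = b) r v)

open Matrix Finset

namespace Matrix

variable {ι R : Type*} [Fintype ι] [DecidableEq ι] [CommRing R]

theorem det_one_sub_of_wellFounded (p : ι → ι → Prop) [DecidableRel p] (hp : WellFounded p) :
    det (1 - of fun w a => if p a w then (1 : R) else 0) = 1 := by
  have : IsWellFounded ι p := ⟨hp⟩
  let := IsWellFounded.wellOrderExtension p
  have hlt : ∀ {a w}, p a w → a < w := fun h =>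
    Prod.Lex.left _ _ (IsWellFounded.rank_lt_of_rel h)
  have hlow : (1 - of fun w a => if p a w then (1 : R) else 0).IsLowerTriangular := by
    intro w a (hwa : w < a)
    rw [sub_apply, one_apply_ne hwa.ne, of_apply, if_neg fun h => (hlt h).not_gt hwa, sub_zero]
  convert det_of_isLowerTriangular _ hlow using 1
  refine (prod_eq_one fun w _ => ?_).symm
  rw [sub_apply, one_apply_eq, of_apply, if_neg fun h => (hlt h).false, sub_zero]

theorem det_one_sub_of_not_wellFounded [IsDomain R] (p : ι → ι → Prop) [DecidableRel p]
    (hp : ¬ WellFounded p) (hpred : ∀ w a b, p a w → p b w → a = b) :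
    det (1 - of fun w a => if p a w then (1 : R) else 0) = 0 := by
  classical
  obtain ⟨w₀, hw₀⟩ : ∃ w, ¬ Acc p w := by
    by_contra! h
    exact hp ⟨h⟩
  rw [← exists_mulVec_eq_zero_iff]
  refine ⟨fun w => if Acc p w then 0 else 1,
    fun h => by simpa [hw₀] using congrFun h w₀, ?_⟩
  funext w
  rw [sub_mulVec, one_mulVec, Pi.sub_apply, Pi.zero_apply, sub_eq_zero, mulVec, dotProduct]
  simp only [of_apply, ite_mul, one_mul, zero_mul]
  by_cases hw : Acc p w
  · rw [if_pos hw]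
    refine (sum_eq_zero fun a _ => ?_).symm
    rw [ite_eq_right_iff]
    exact fun h => if_pos (hw.inv h)
  · obtain ⟨a, hpa, ha⟩ : ∃ a, p a w ∧ ¬ Acc p a := by
      by_contra! h
      exact hw ⟨w, h⟩
    rw [if_neg hw, sum_eq_single a (fun b _ hba => if_neg fun hpb => hba (hpred w b a hpb hpa))
      (by simp), if_pos hpa, if_neg ha]

theorem det_of_sum_smul_rows {κ : Type*} (A : ι → Finset κ) (c : κ → R)
    (v : κ → ι → R) :
    det (of fun w => ∑ e ∈ A w, c e • v e) =
      ∑ r ∈ Fintype.piFinset A, (∏ w, c (r w)) * det (of fun w => v (r w)) := by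
  change detRowAlternating.toMultilinearMap (fun w => ∑ e ∈ A w, c e • v e) = _
  rw [MultilinearMap.map_sum_finset]
  exact sum_congr rfl fun r _ => MultilinearMap.map_smul_univ _ _ _

end Matrix

noncomputable def kirchhoff {V E : Type*} [DecidableEq V] [Fintype E] (src tgt : E → V) :
    Matrix V V (MvPolynomial E ℤ) :=
  of fun a b => if a = b then ∑ e ∈ univ.filter (fun e => tgt e = a), X e
    else -∑ e ∈ univ.filter (fun e => src e = a ∧ tgt e = b), X e

noncomputable def arcVector {V E : Type*} [DecidableEq V] (src tgt : E → V) (e : E) :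
    V → MvPolynomial E ℤ :=
  Pi.single (tgt e) 1 - Pi.single (src e) 1

section Kirchhoff

variable {V E : Type*} [DecidableEq V] [Fintype E] {src tgt : E → V}

theorem kirchhoff_transpose (hloop : ∀ e, src e ≠ tgt e) :
    (kirchhoff src tgt)ᵀ = of fun b =>
      ∑ e ∈ univ.filter (fun e => tgt e = b),
        (X e : MvPolynomial E ℤ) • arcVector src tgt e := by
  refine Matrix.ext fun b a => ?_
  rw [transpose_apply, of_apply, Finset.sum_apply, kirchhoff, of_apply]
  simp only [arcVector, Pi.smul_apply, Pi.sub_apply, smul_eq_mul, Pi.single_apply, sum_filter]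
  split_ifs with hab
  · subst hab
    exact sum_congr rfl fun e _ => by grind
  · rw [← sum_neg_distrib]
    exact sum_congr rfl fun e _ => by grind

theorem kirchhoff_submatrix_transpose {ι : Type*} (hloop : ∀ e, src e ≠ tgt e) (s : ι → V) :
    ((kirchhoff src tgt).submatrix s s)ᵀ = of fun w =>
      ∑ e ∈ univ.filter (fun e => tgt e = s w),
        (X e : MvPolynomial E ℤ) • fun a => arcVector src tgt e (s a) := by
  rw [transpose_submatrix, kirchhoff_transpose hloop]
  refine Matrix.ext fun w a => ?_
  simp only [submatrix_apply, of_apply, Finset.sum_apply, Pi.smul_apply]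

end Kirchhoff

theorem mem_piFinset_filter_tgt_iff {ι V E : Type*} [Fintype ι] [DecidableEq ι] [Fintype E]
    [DecidableEq V] {tgt : E → V} {s : ι → V} {r : ι → E} :
    r ∈ Fintype.piFinset (fun w => univ.filter fun e => tgt e = s w) ↔
      ∀ w, tgt (r w) = s w := by
  simp

section OutBranching

variable {n : ℕ} {E : Type} [DecidableEq E] {src tgt : E → Fin (n + 1)} {i : Fin (n + 1)}

theorem isOutBranchingAt_image_iff {r : Fin n → E} (htgt : ∀ w, tgt (r w) = i.succAbove w) :
    IsOutBranchingAt src tgt (univ.image r) i ↔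
      WellFounded fun z w => src (r w) = i.succAbove z := by
  constructor
  · rintro ⟨-, -, hreach⟩
    suffices h : ∀ v, Relation.ReflTransGen
        (fun a b => ∃ e ∈ univ.image r, src e = a ∧ tgt e = b) i v →
        ∀ w, i.succAbove w = v → Acc (fun z w => src (r w) = i.succAbove z) w from
      ⟨fun w => h _ (hreach _) w rfl⟩
    intro v hv
    induction hv with
    | refl => exact fun w hw => absurd hw (Fin.succAbove_ne i w)
    | tail _ hstep ih =>
      rintro w rfl
      obtain ⟨e, he, hse, hte⟩ := hstep
      obtain ⟨w', -, rfl⟩ := mem_image.1 he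
      obtain rfl : w' = w := Fin.succAbove_right_injective ((htgt w').symm.trans hte)
      exact ⟨w', fun z hz => ih z (hz.symm.trans hse)⟩
  · intro hwf
    refine ⟨?_, fun v hv => ?_, fun v => ?_⟩
    · rintro _ he
      obtain ⟨w, -, rfl⟩ := mem_image.1 he
      exact htgt w ▸ Fin.succAbove_ne i w
    · obtain ⟨w, rfl⟩ := Fin.exists_succAbove_eq hv
      refine ⟨r w, ⟨mem_image_of_mem r (mem_univ w), htgt w⟩, ?_⟩
      rintro _ ⟨he, hte⟩
      obtain ⟨w', -, rfl⟩ := mem_image.1 he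
      rw [Fin.succAbove_right_injective ((htgt w').symm.trans hte)]
    · rcases Fin.eq_self_or_eq_succAbove i v with rfl | ⟨w, rfl⟩
      · exact Relation.ReflTransGen.refl
      induction w using hwf.induction with
      | _ w ih =>
        have hstep : ∃ e ∈ univ.image r, src e = src (r w) ∧ tgt e = i.succAbove w :=
          ⟨r w, mem_image_of_mem r (mem_univ w), rfl, htgt w⟩
        by_cases hroot : src (r w) = i
        · exact .single (hroot ▸ hstep)
        · obtain ⟨z, hz⟩ := Fin.exists_succAbove_eq hroot
          exact .tail (ih z hz.symm) (hz ▸ hstep)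

theorem IsOutBranchingAt.exists_eq_image {B : Finset E} (hB : IsOutBranchingAt src tgt B i) :
    ∃ r : Fin n → E, (∀ w, tgt (r w) = i.succAbove w) ∧ univ.image r = B := by
  choose r hr using fun w => (hB.2.1 (i.succAbove w) (Fin.succAbove_ne i w)).exists
  refine ⟨r, fun w => (hr w).2, Finset.ext fun e => ⟨?_, fun he => ?_⟩⟩
  · rintro he
    obtain ⟨w, -, rfl⟩ := mem_image.1 he
    exact (hr w).1
  · obtain ⟨w, hw⟩ := Fin.exists_succAbove_eq (hB.1 e he)
    exact mem_image.2 ⟨w, mem_univ w,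
      (hB.2.1 _ (hw ▸ Fin.succAbove_ne i w)).unique (hr w) ⟨he, hw.symm⟩⟩

open scoped Classical in
theorem sum_piFinset_image_eq_sum_isOutBranchingAt [Fintype E] {M : Type*} [AddCommMonoid M]
    (f : Finset E → M) :
    ∑ r ∈ Fintype.piFinset (fun w : Fin n => univ.filter fun e => tgt e = i.succAbove w),
        (if IsOutBranchingAt src tgt (univ.image r) i then f (univ.image r) else 0) =
      ∑ B, if IsOutBranchingAt src tgt B i then f B else 0 := by
  have hinj : Set.InjOn (fun r : Fin n → E => univ.image r)
      (Fintype.piFinset fun w => univ.filter fun e => tgt e = i.succAbove w) := by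
    intro r hr r' hr' h
    funext w
    have hw : r w ∈ univ.image r' := by
      rw [← show univ.image r = univ.image r' from h]
      exact mem_image_of_mem r (mem_univ w)
    obtain ⟨w', -, hw'⟩ := mem_image.1 hw
    have : w' = w := Fin.succAbove_right_injective <| by
      rw [← mem_piFinset_filter_tgt_iff.1 hr', ← mem_piFinset_filter_tgt_iff.1 hr, hw']
    rw [← hw', this]
  rw [← sum_image (f := fun B => if IsOutBranchingAt src tgt B i then f B else 0) hinj]
  refine sum_subset (subset_univ _) fun B _ hB => if_neg fun hOB => hB ?_
  obtain ⟨r, htgt, rfl⟩ := hOB.exists_eq_image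
  exact mem_image_of_mem _ (mem_piFinset_filter_tgt_iff.2 htgt)

open scoped Classical in
theorem det_arcVector_rows {r : Fin n → E} (htgt : ∀ w, tgt (r w) = i.succAbove w) :
    det (of fun w a => arcVector src tgt (r w) (i.succAbove a)) =
      if IsOutBranchingAt src tgt (univ.image r) i then 1 else 0 := by
  have hrows : (of fun w a => arcVector src tgt (r w) (i.succAbove a)) =
      1 - of fun w a => if src (r w) = i.succAbove a then 1 else 0 := by
    refine Matrix.ext fun w a => ?_
    simp only [of_apply, arcVector, Pi.sub_apply, Pi.single_apply, htgt, Matrix.sub_apply,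
      one_apply, Fin.succAbove_right_inj, eq_comm]
  rw [hrows]
  split_ifs with hB
  · exact det_one_sub_of_wellFounded _ ((isOutBranchingAt_image_iff htgt).1 hB)
  · exact det_one_sub_of_not_wellFounded _ (mt (isOutBranchingAt_image_iff htgt).2 hB)
      fun w a b ha hb => Fin.succAbove_right_injective (ha.symm.trans hb)

end OutBranching

open scoped Classical in
/-- The (directed) Matrix Tree Theorem: for a loopless directed multigraph on vertex set
`Fin (n+1)` with arc set `E`, and any vertex `i`, the determinant of the symbolic Kirchhoff
matrix with the `i`-th row and column deleted equals the sum, over all out-branchings `B`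
rooted at `i`, of `∏_{e ∈ B} x_e`. -/
theorem stmt_3 (n : ℕ) (E : Type) [Fintype E] (src tgt : E → Fin (n + 1))
    (hloop : ∀ e : E, src e ≠ tgt e) (i : Fin (n + 1)) :
    Matrix.det
      ((Matrix.of fun a b : Fin (n + 1) =>
          if a = b then
            ∑ e ∈ Finset.univ.filter (fun e : E => tgt e = a), (X e : MvPolynomial E ℤ)
          else
            -∑ e ∈ Finset.univ.filter (fun e : E => src e = a ∧ tgt e = b),
              (X e : MvPolynomial E ℤ)).submatrix i.succAbove i.succAbove)
      = ∑ B : Finset E,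
          if IsOutBranchingAt src tgt B i then ∏ e ∈ B, (X e : MvPolynomial E ℤ) else 0 := by
  change det ((kirchhoff src tgt).submatrix i.succAbove i.succAbove) = _
  rw [← det_transpose, kirchhoff_submatrix_transpose hloop, det_of_sum_smul_rows,
    ← sum_piFinset_image_eq_sum_isOutBranchingAt]
  refine sum_congr rfl fun r hr => ?_
  have htgt := mem_piFinset_filter_tgt_iff.1 hr
  have hinj : Function.Injective r := fun w w' h =>
    Fin.succAbove_right_injective (by rw [← htgt, ← htgt, h])
  rw [det_arcVector_rows htgt, prod_image fun w _ w' _ h => hinj h, mul_ite, mul_one, mul_zero]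
end

section
/- For every positive integer k, √(2πk)·(k/e)^k·e^{1/(12k+1)} ≤ k! ≤ √(2πk)·(k/e)^k·e^{1/(12k)}. -/
/-!
Write `s n = n! / (√(2n) (n/e)^n)` for Mathlib's Stirling sequence, so that `log s n → log √π`.
Its series expansion gives `log s n - log s (n+1) = ∑_{j ≥ 1} r^j / (2j+1)` with
`r = (2n+1)⁻²`. Bounding this sum above by `∑ r^j / 3` and below by its first term `r / 3`
squeezes each step between the steps of `1 / (12n+1)` and of `1 / (12n)`. Hence
`log s n - 1/(12n)` increases and `log s n - 1/(12n+1)` decreases to `log √π`.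
-/

open Real Filter Topology Nat

lemma le_add_of_sub_succ_le_sub_succ_of_tendsto {u g : ℕ → ℝ} {L : ℝ}
    (hstep : ∀ n, u n - u (n + 1) ≤ g n - g (n + 1)) (hu : Tendsto u atTop (𝓝 L))
    (hg : Tendsto g atTop (𝓝 0)) (n : ℕ) : u n ≤ L + g n := by
  have hmono : Monotone fun n ↦ u n - g n := monotone_nat_of_le_succ fun n ↦ by linarith [hstep n]
  linarith [hmono.ge_of_tendsto (by simpa using hu.sub hg) n]

lemma add_le_of_sub_succ_le_sub_succ_of_tendsto {u g : ℕ → ℝ} {L : ℝ}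
    (hstep : ∀ n, g n - g (n + 1) ≤ u n - u (n + 1)) (hu : Tendsto u atTop (𝓝 L))
    (hg : Tendsto g atTop (𝓝 0)) (n : ℕ) : L + g n ≤ u n := by
  have hanti : Antitone fun n ↦ u n - g n := antitone_nat_of_succ_le fun n ↦ by linarith [hstep n]
  linarith [hanti.le_of_tendsto (by simpa using hu.sub hg) n]

namespace Stirling

lemma le_log_stirlingSeq_sdiff {n : ℕ} (hn : n ≠ 0) :
    1 / (12 * n + 1) - 1 / (12 * (n + 1) + 1) ≤
      log (stirlingSeq n) - log (stirlingSeq (n + 1)) := by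
  obtain ⟨m, rfl⟩ : ∃ m, n = m + 1 := exists_eq_succ_of_ne_zero hn
  refine le_trans ?_ <| le_hasSum (log_stirlingSeq_sdiff_hasSum m) 0 fun j _ ↦ by positivity
  have hm : (0 : ℝ) ≤ m := m.cast_nonneg
  push_cast
  rw [div_sub_div _ _ (by positivity) (by positivity), div_le_iff₀ (by positivity)]
  field_simp
  nlinarith

lemma tendsto_one_div_twelve_mul_succ_add (c : ℝ) :
    Tendsto (fun n : ℕ ↦ 1 / (12 * ((n + 1 : ℕ) : ℝ) + c)) atTop (𝓝 0) :=
  tendsto_const_nhds.div_atTop <| tendsto_atTop_add_const_right _ c <|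
    (tendsto_natCast_atTop_atTop.comp (tendsto_add_atTop_nat 1)).const_mul_atTop (by norm_num)

lemma tendsto_log_stirlingSeq_succ :
    Tendsto (fun n : ℕ ↦ log (stirlingSeq (n + 1))) atTop (𝓝 (log √π)) :=
  (tendsto_stirlingSeq_sqrt_pi.log (by positivity)).comp (tendsto_add_atTop_nat 1)

lemma log_stirlingSeq_le {n : ℕ} (hn : n ≠ 0) :
    log (stirlingSeq n) ≤ log √π + 1 / (12 * n) := by
  obtain ⟨m, rfl⟩ : ∃ m, n = m + 1 := exists_eq_succ_of_ne_zero hn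
  refine le_add_of_sub_succ_le_sub_succ_of_tendsto (fun k ↦ ?_) tendsto_log_stirlingSeq_succ
    (by simpa only [add_zero] using tendsto_one_div_twelve_mul_succ_add 0) m
  have hk : (0 : ℝ) < k + 1 := by positivity
  have htelescope : 1 / (12 * ((k : ℝ) + 1) * ((k : ℝ) + 1 + 1)) =
      1 / (12 * ((k : ℝ) + 1)) - 1 / (12 * ((k : ℝ) + 1 + 1)) := by
    field_simp; ring
  simpa [htelescope] using log_stirlingSeq_sdiff_le (k + 1)

lemma le_log_stirlingSeq {n : ℕ} (hn : n ≠ 0) :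
    log √π + 1 / (12 * n + 1) ≤ log (stirlingSeq n) := by
  obtain ⟨m, rfl⟩ : ∃ m, n = m + 1 := exists_eq_succ_of_ne_zero hn
  refine add_le_of_sub_succ_le_sub_succ_of_tendsto (fun k ↦ ?_) tendsto_log_stirlingSeq_succ
    (tendsto_one_div_twelve_mul_succ_add 1) m
  simpa using le_log_stirlingSeq_sdiff k.succ_ne_zero

lemma stirlingSeq_le_sqrt_pi_mul_exp {n : ℕ} (hn : n ≠ 0) :
    stirlingSeq n ≤ √π * exp (1 / (12 * n)) := by
  have hpos : 0 < stirlingSeq n := (sqrt_pos.2 pi_pos).trans_le (sqrt_pi_le_stirlingSeq hn)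
  rw [← exp_log hpos, ← exp_log (sqrt_pos.2 pi_pos), ← exp_add]
  exact exp_le_exp.2 (log_stirlingSeq_le hn)

lemma sqrt_pi_mul_exp_le_stirlingSeq {n : ℕ} (hn : n ≠ 0) :
    √π * exp (1 / (12 * n + 1)) ≤ stirlingSeq n := by
  have hpos : 0 < stirlingSeq n := (sqrt_pos.2 pi_pos).trans_le (sqrt_pi_le_stirlingSeq hn)
  rw [← exp_log hpos, ← exp_log (sqrt_pos.2 pi_pos), ← exp_add]
  exact exp_le_exp.2 (le_log_stirlingSeq hn)

end Stirling

/-- Robbins' refinement of Stirling's approximation. -/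
theorem stmt_10 (k : ℕ) (hk : 1 ≤ k) :
    Real.sqrt (2 * Real.pi * k) * (k / Real.exp 1) ^ k * Real.exp (1 / (12 * k + 1))
      ≤ (k.factorial : ℝ) ∧
    (k.factorial : ℝ)
      ≤ Real.sqrt (2 * Real.pi * k) * (k / Real.exp 1) ^ k * Real.exp (1 / (12 * k)) := by
  have hk0 : k ≠ 0 := by omega
  set scale : ℝ := √(2 * k : ℝ) * (k / exp 1) ^ k
  have hscale : 0 < scale := by positivity
  have hsplit : √(2 * π * k) * (k / exp 1) ^ k = √π * scale := by
    rw [← mul_assoc, ← sqrt_mul pi_pos.le]; ring_nf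
  have hfac : (k ! : ℝ) = Stirling.stirlingSeq k * scale := (div_mul_cancel₀ _ hscale.ne').symm
  rw [hsplit, hfac]
  constructor
  · rw [mul_right_comm]
    exact mul_le_mul_of_nonneg_right (Stirling.sqrt_pi_mul_exp_le_stirlingSeq hk0) hscale.le
  · rw [mul_right_comm _ scale]
    exact mul_le_mul_of_nonneg_right (Stirling.stirlingSeq_le_sqrt_pi_mul_exp hk0) hscale.le
end

section
/- For every real β with 0 < β < 1, β^β · (1−β)^{1−β} · e^β ≥ e/(e+1), with equality attained at the minimizer of g(β) = β^β(1−β)^{1−β}e^β over (0,1). -/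
/-!
Write `q = e/(e+1)` and `p = q e⁻¹ = 1/(e+1)`, so that `p + q = 1`. Weighted AM-GM applied to
`p/β` and `q/(1-β)` with weights `β, 1-β` gives the two-point Gibbs inequality
`p^β q^(1-β) ≤ β^β (1-β)^(1-β)`, and the choice of `p` makes the left side equal to `q e^(-β)`.
Hence `β^β (1-β)^(1-β) e^β ≥ q`, with equality at `β = p`.
-/

open Real

theorem rpow_mul_rpow_one_sub_le_self_rpow_mul_rpow_one_sub {β p q : ℝ} (hβ₀ : 0 < β)
    (hβ₁ : β < 1) (hp : 0 ≤ p) (hq : 0 ≤ q) (hpq : p + q = 1) :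
    p ^ β * q ^ (1 - β) ≤ β ^ β * (1 - β) ^ (1 - β) := by
  have hβ₁' : 0 < 1 - β := sub_pos.2 hβ₁
  have amgm := geom_mean_le_arith_mean2_weighted hβ₀.le hβ₁'.le (div_nonneg hp hβ₀.le)
    (div_nonneg hq hβ₁'.le) (add_sub_cancel β 1)
  rwa [div_rpow hp hβ₀.le, div_rpow hq hβ₁'.le, mul_div_cancel₀ _ hβ₀.ne',
    mul_div_cancel₀ _ hβ₁'.ne', hpq, div_mul_div_comm,
    div_le_one (by positivity)] at amgm

theorem mul_exp_rpow_mul_rpow_one_sub {q : ℝ} (hq : 0 < q) (a β : ℝ) :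
    (q * exp a) ^ β * q ^ (1 - β) = q * exp (a * β) := by
  rw [mul_rpow hq.le (exp_pos a).le, ← exp_mul, mul_right_comm, ← rpow_add hq,
    add_sub_cancel, rpow_one]

/-- For every `β ∈ (0,1)`, `β^β (1-β)^(1-β) e^β ≥ e/(e+1)`, with equality attained at the
minimizer of `g(β) = β^β (1-β)^(1-β) e^β` over `(0,1)`. -/
theorem stmt_12 :
    (∀ β : ℝ, 0 < β → β < 1 →
      Real.exp 1 / (Real.exp 1 + 1) ≤ β ^ β * (1 - β) ^ (1 - β) * Real.exp β) ∧
    (∃ β₀ : ℝ, 0 < β₀ ∧ β₀ < 1 ∧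
      β₀ ^ β₀ * (1 - β₀) ^ (1 - β₀) * Real.exp β₀ = Real.exp 1 / (Real.exp 1 + 1) ∧
      ∀ β : ℝ, 0 < β → β < 1 →
        β₀ ^ β₀ * (1 - β₀) ^ (1 - β₀) * Real.exp β₀
          ≤ β ^ β * (1 - β) ^ (1 - β) * Real.exp β) := by
  set q := exp 1 / (exp 1 + 1)
  set p := q * exp (-1)
  have hq : 0 < q := by positivity
  have hp : 0 < p := by positivity
  have hpq : p + q = 1 := by
    simp only [p, q, exp_neg]
    field_simp
    ring
  have hp_compl : 1 - p = q := by linarith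
  have tilt (β : ℝ) : p ^ β * (1 - p) ^ (1 - β) * exp β = q := by
    rw [hp_compl, mul_exp_rpow_mul_rpow_one_sub hq, mul_assoc, ← exp_add, neg_one_mul,
      neg_add_cancel, exp_zero, mul_one]
  have lower (β : ℝ) (hβ₀ : 0 < β) (hβ₁ : β < 1) :
      q ≤ β ^ β * (1 - β) ^ (1 - β) * exp β := by
    rw [← tilt β]
    refine mul_le_mul_of_nonneg_right ?_ (exp_pos β).le
    exact rpow_mul_rpow_one_sub_le_self_rpow_mul_rpow_one_sub hβ₀ hβ₁ hp.le (hp_compl ▸ hq.le)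
      (add_sub_cancel p 1)
  refine ⟨lower, p, hp, by linarith, tilt p, fun β hβ₀ hβ₁ => ?_⟩
  rw [tilt p]
  exact lower β hβ₀ hβ₁
end

section
/- The function h(α) = (1 − 1/α)^{α−1}·2^α on (1, ∞) attains its minimum at the unique α* ∈ (1, ∞) satisfying (1 − 1/α)^α · 2^α = 1/e, and at this minimizer h(α*)·e = α*/(α* − 1). Moreover α* ∈ (1.302017, 1.302018), so the minimum value of h(α)·e is less than 4.312. -/
/-!
With `g(α) = (1 - 1/α)^α 2^α` we have `h(α) = g(α) · α/(α - 1)`. The logarithm of `g` is strictly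
increasing on `(1, ∞)` and `(log h)' = (log g + 1)/α`, so `h` decreases up to the unique root `a` of
`g = 1/e` and increases after it, and `h(a) e = a/(a - 1)`. Degree-10 Taylor bounds for
`exp (-1/α)` at `α = 1.302017` and `α = 1.302018` bracket `a` via the intermediate value theorem.
-/

open Real Set

noncomputable def logG (α : ℝ) : ℝ := α * (log (1 - 1 / α) + log 2)

noncomputable def logH (α : ℝ) : ℝ := (α - 1) * log (1 - 1 / α) + α * log 2

section
variable {α : ℝ}

lemma one_sub_one_div_pos (hα : 1 < α) : 0 < 1 - 1 / α := by
  rw [sub_pos, div_lt_one (by linarith)]; exact hα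

lemma exp_logG (hα : 1 < α) : exp (logG α) = (1 - 1 / α) ^ α * 2 ^ α := by
  rw [rpow_def_of_pos (one_sub_one_div_pos hα), rpow_def_of_pos two_pos, ← exp_add, logG]
  ring_nf

lemma exp_logH (hα : 1 < α) : exp (logH α) = (1 - 1 / α) ^ (α - 1) * 2 ^ α := by
  rw [rpow_def_of_pos (one_sub_one_div_pos hα), rpow_def_of_pos two_pos, ← exp_add, logH]
  ring_nf

lemma one_sub_one_div_rpow_sub_one_mul (hα : 1 < α) :
    (1 - 1 / α) ^ (α - 1) * 2 ^ α = (1 - 1 / α) ^ α * 2 ^ α * (α / (α - 1)) := by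
  have hα₀ : α ≠ 0 := by positivity
  have hα₁ : α - 1 ≠ 0 := by linarith
  rw [rpow_sub_one (one_sub_one_div_pos hα).ne']
  field_simp

lemma hasDerivAt_log_one_sub_one_div (hα : 1 < α) :
    HasDerivAt (fun x => log (1 - 1 / x)) (1 / (α * (α - 1))) α := by
  have hα₀ : α ≠ 0 := by positivity
  have hα₁ : α - 1 ≠ 0 := by linarith
  have h := ((hasDerivAt_inv hα₀).const_sub 1).log (by simpa using (one_sub_one_div_pos hα).ne')
  simp only [one_div] at h ⊢
  convert h using 1
  field_simp

lemma hasDerivAt_logG (hα : 1 < α) :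
    HasDerivAt logG (log (1 - 1 / α) + log 2 + 1 / (α - 1)) α := by
  have hα₀ : α ≠ 0 := by positivity
  have hα₁ : α - 1 ≠ 0 := by linarith
  refine ((hasDerivAt_id' α).mul
    ((hasDerivAt_log_one_sub_one_div hα).add_const (log 2))).congr_deriv ?_
  field_simp

lemma hasDerivAt_logH (hα : 1 < α) : HasDerivAt logH ((logG α + 1) / α) α := by
  have hα₀ : α ≠ 0 := by positivity
  have hα₁ : α - 1 ≠ 0 := by linarith
  refine ((((hasDerivAt_id' α).sub_const 1).mul (hasDerivAt_log_one_sub_one_div hα)).add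
    ((hasDerivAt_id' α).mul_const (log 2))).congr_deriv ?_
  rw [logG]
  field_simp
  ring

/-- `logG' > 0` is `log y ≥ 1 - 1/y` at `y = 2 (1 - 1/α)`. -/
lemma logG_deriv_pos (hα : 1 < α) : 0 < log (1 - 1 / α) + log 2 + 1 / (α - 1) := by
  have hy := one_sub_inv_le_log_of_pos (mul_pos (one_sub_one_div_pos hα) two_pos)
  rw [log_mul (one_sub_one_div_pos hα).ne' two_ne_zero] at hy
  have : 0 < 1 - ((1 - 1 / α) * 2)⁻¹ + 1 / (α - 1) := by
    have hα₁ : 0 < α - 1 := by linarith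
    rw [show 1 - ((1 - 1 / α) * 2)⁻¹ + 1 / (α - 1) = α / (2 * (α - 1)) by
      field_simp; ring]
    positivity
  linarith

lemma strictMonoOn_logG : StrictMonoOn logG (Ioi 1) :=
  strictMonoOn_of_hasDerivWithinAt_pos (convex_Ioi 1)
    (fun x hx => (hasDerivAt_logG hx).continuousAt.continuousWithinAt)
    (fun x hx => (hasDerivAt_logG (by simpa using hx)).hasDerivWithinAt)
    (fun x hx => logG_deriv_pos (by simpa using hx))

lemma isMinOn_logH {a : ℝ} (ha : 1 < a) (hGa : logG a = -1) : IsMinOn logH (Ioi 1) a := by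
  have hcont {s : Set ℝ} (hs : s ⊆ Ioi 1) : ContinuousOn logH s :=
    fun x hx => (hasDerivAt_logH (hs hx)).continuousAt.continuousWithinAt
  intro b (hb : 1 < b)
  rcases le_total b a with hba | hab
  · refine antitoneOn_of_hasDerivWithinAt_nonpos (convex_Ioc 1 a) (hcont Ioc_subset_Ioi_self)
      (fun x hx => (hasDerivAt_logH (interior_subset hx).1).hasDerivWithinAt) (fun x hx => ?_)
      ⟨hb, hba⟩ ⟨ha, le_rfl⟩ hba
    rw [interior_Ioc] at hx
    have : logG x < logG a := strictMonoOn_logG hx.1 ha hx.2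
    exact div_nonpos_of_nonpos_of_nonneg (by linarith) (by linarith [hx.1])
  · refine monotoneOn_of_hasDerivWithinAt_nonneg (convex_Ici a)
      (hcont fun x (hx : a ≤ x) => ha.trans_le hx)
      (fun x hx => (hasDerivAt_logH (ha.trans_le (interior_subset hx))).hasDerivWithinAt)
      (fun x hx => ?_)
      self_mem_Ici hab hab
    rw [interior_Ici] at hx
    have : logG a < logG x := strictMonoOn_logG ha (ha.trans hx) hx
    exact div_nonneg (by linarith) (by linarith [ha.trans hx])

lemma logG_lt_neg_one_iff (hα : 1 < α) : logG α < -1 ↔ (1 - 1 / α) * 2 < exp (-1 / α) := by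
  rw [logG, ← log_mul (one_sub_one_div_pos hα).ne' two_ne_zero, ← lt_div_iff₀' (by linarith),
    log_lt_iff_lt_exp (mul_pos (one_sub_one_div_pos hα) two_pos)]

lemma neg_one_lt_logG_iff (hα : 1 < α) : -1 < logG α ↔ exp (-1 / α) < (1 - 1 / α) * 2 := by
  rw [logG, ← log_mul (one_sub_one_div_pos hα).ne' two_ne_zero, ← div_lt_iff₀' (by linarith),
    lt_log_iff_exp_lt (mul_pos (one_sub_one_div_pos hα) two_pos)]

end

lemma abs_exp_sub_sum_range_ten_le {x : ℝ} (hx : |x| ≤ 1) :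
    |exp x - ∑ m ∈ Finset.range 10, x ^ m / m.factorial| ≤ |x| ^ 10 * (11 / 36288000) := by
  convert exp_bound hx (n := 10) (by norm_num) using 2
  norm_num [Nat.factorial]

lemma logG_lt_neg_one : logG 1.302017 < -1 := by
  rw [logG_lt_neg_one_iff (by norm_num)]
  have h := abs_exp_sub_sum_range_ten_le (x := -1 / 1.302017) (by norm_num [abs_div])
  simp only [Finset.sum_range_succ, Finset.sum_range_zero, abs_le] at h
  norm_num [Nat.factorial, abs_div] at h ⊢
  linarith [h.1]

lemma neg_one_lt_logG : -1 < logG 1.302018 := by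
  rw [neg_one_lt_logG_iff (by norm_num)]
  have h := abs_exp_sub_sum_range_ten_le (x := -1 / 1.302018) (by norm_num [abs_div])
  simp only [Finset.sum_range_succ, Finset.sum_range_zero, abs_le] at h
  norm_num [Nat.factorial, abs_div] at h ⊢
  linarith [h.2]

/-- The function `h(α) = (1-1/α)^(α-1)·2^α` on `(1,∞)` attains its minimum at the unique
`α* ∈ (1,∞)` with `(1-1/α*)^{α*}·2^{α*} = 1/e`, where `h(α*)·e = α*/(α*-1)`,
`α* ∈ (1.302017, 1.302018)`, and `h(α*)·e < 4.312`. -/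
theorem stmt_15 :
    ∃ a : ℝ, 1 < a ∧
      (1 - 1 / a) ^ a * 2 ^ a = 1 / Real.exp 1 ∧
      (∀ b : ℝ, 1 < b → (1 - 1 / b) ^ b * 2 ^ b = 1 / Real.exp 1 → b = a) ∧
      (∀ α : ℝ, 1 < α →
        (1 - 1 / a) ^ (a - 1) * 2 ^ a ≤ (1 - 1 / α) ^ (α - 1) * 2 ^ α) ∧
      (1 - 1 / a) ^ (a - 1) * 2 ^ a * Real.exp 1 = a / (a - 1) ∧
      1.302017 < a ∧ a < 1.302018 ∧
      (1 - 1 / a) ^ (a - 1) * 2 ^ a * Real.exp 1 < 4.312 := by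
  have hcont : ContinuousOn logG (Icc 1.302017 1.302018) := fun x hx =>
    (hasDerivAt_logG (by linarith [hx.1])).continuousAt.continuousWithinAt
  obtain ⟨a, ⟨ha₁, ha₂⟩, hGa⟩ := intermediate_value_Ioo (by norm_num) hcont
    ⟨logG_lt_neg_one, neg_one_lt_logG⟩
  have ha : 1 < a := by linarith
  have hg {b : ℝ} (hb : 1 < b) : (1 - 1 / b) ^ b * 2 ^ b = 1 / exp 1 ↔ logG b = -1 := by
    rw [← exp_logG hb, one_div, ← exp_neg, exp_eq_exp]
  have hval : (1 - 1 / a) ^ (a - 1) * 2 ^ a * exp 1 = a / (a - 1) := by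
    rw [one_sub_one_div_rpow_sub_one_mul ha, (hg ha).2 hGa]
    field_simp
  refine ⟨a, ha, (hg ha).2 hGa, fun b hb hgb => ?_, fun α hα => ?_, hval, ha₁, ha₂, ?_⟩
  · exact strictMonoOn_logG.injOn hb ha (((hg hb).1 hgb).trans hGa.symm)
  · rw [← exp_logH ha, ← exp_logH hα, exp_le_exp]
    exact isMinOn_logH ha hGa hα
  · rw [hval, div_lt_iff₀ (by linarith)]
    linarith
end

section
/- Let G be a graph obtained from a path P = v_1 − v_2 − ⋯ − v_n with edge-coloring c, a disjoint copy P' = v'_1 − ⋯ − v'_n of P whose edges are all colored with a fresh color c*, together with edges v_i v'_i of color c* for all i ∈ [n]. Then G has a perfect matching using edges of at least k+1 distinct colors if and only if P has a matching of size k whose k edges have k pairwise distinct colors. -/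
open scoped Classical

set_option maxHeartbeats 1000000

lemma rep_lemma {C : Type} [DecidableEq C] (c : ℕ → C) (S₀ : Finset ℕ) (k : ℕ)
    (hk : k ≤ (S₀.image c).card) :
    ∃ S : Finset ℕ, S ⊆ S₀ ∧ S.card = k ∧ Set.InjOn c ↑S := by
  classical
  set T := S₀.image c with hT
  have hrep : ∀ b ∈ T, ∃ i, i ∈ S₀ ∧ c i = b := by
    intro b hb; simpa using Finset.mem_image.mp hb
  choose! g hg1 hg2 using hrep
  have hginj : Set.InjOn g ↑T := by
    intro a ha b hb hab
    rw [← hg2 a ha, ← hg2 b hb, hab]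
  set S₁ := T.image g with hS₁
  have hsub1 : S₁ ⊆ S₀ := by
    intro i hi
    obtain ⟨b, hb, rfl⟩ := Finset.mem_image.mp hi
    exact hg1 b hb
  have hcard1 : S₁.card = T.card := Finset.card_image_of_injOn hginj
  have hinj1 : Set.InjOn c ↑S₁ := by
    intro i hi j hj hij
    obtain ⟨a, ha, rfl⟩ := Finset.mem_image.mp hi
    obtain ⟨b, hb, rfl⟩ := Finset.mem_image.mp hj
    rw [hg2 a ha, hg2 b hb] at hij
    rw [hij]
  obtain ⟨S, hSsub, hScard⟩ := Finset.exists_subset_card_eq (hcard1 ▸ hk : k ≤ S₁.card)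
  exact ⟨S, hSsub.trans hsub1, hScard, hinj1.mono (by exact_mod_cast hSsub)⟩

lemma Lpp {i j : ℕ} {b b' : Bool} {x : ℕ × Bool} (hx : x ∈ s(((i : ℕ), b), (i + 1, b)))
    (hxf : x ∈ s(((j : ℕ), b'), (j + 1, b')))
    (h : b = b' → i ≠ j ∧ i + 1 ≠ j ∧ j + 1 ≠ i) : False := by
  rcases Sym2.mem_iff.mp hx with rfl | rfl <;>
    rcases Sym2.mem_iff.mp hxf with h' | h' <;>
    rw [Prod.ext_iff] at h' <;> obtain ⟨h1, h2⟩ := h' <;>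
    obtain ⟨a1, a2, a3⟩ := h h2 <;> omega

lemma Lpr {i j : ℕ} {b : Bool} {x : ℕ × Bool} (hx : x ∈ s(((i : ℕ), b), (i + 1, b)))
    (hxf : x ∈ s(((j : ℕ), false), (j, true))) (h1 : j ≠ i) (h2 : j ≠ i + 1) : False := by
  rcases Sym2.mem_iff.mp hx with rfl | rfl <;>
    rcases Sym2.mem_iff.mp hxf with h' | h' <;>
    rw [Prod.ext_iff] at h' <;> obtain ⟨a, -⟩ := h' <;> omega

lemma Lrr {i j : ℕ} {x : ℕ × Bool} (hx : x ∈ s(((i : ℕ), false), (i, true)))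
    (hxf : x ∈ s(((j : ℕ), false), (j, true))) (h : i ≠ j) : False := by
  rcases Sym2.mem_iff.mp hx with rfl | rfl <;>
    rcases Sym2.mem_iff.mp hxf with h' | h' <;>
    rw [Prod.ext_iff] at h' <;> obtain ⟨a, -⟩ := h' <;> omega

/-- The graph `G` of the reduction: vertices are `(i,b)` with `i < n`; `b = false` gives the
path `P = v_0 - ⋯ - v_{n-1}`, `b = true` its copy `P'`, plus the rungs `v_i v'_i`.
Path edges of `P` keep their colors `c i`; all other edges get the fresh color `cstar`.
Then `G` has a perfect matching with edges of at least `k+1` distinct colors iff `P` has a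
rainbow matching of size `k`. -/
theorem stmt_16 (n k : ℕ) (hn : 1 ≤ n) (C : Type) [DecidableEq C]
    (c : ℕ → C) (cstar : C) (hfresh : ∀ i : ℕ, i + 1 < n → c i ≠ cstar)
    -- the edge set of `G`
    (EG : Set (Sym2 (ℕ × Bool)))
    (hEG : EG = {e | ∃ i : ℕ, i + 1 < n ∧
        (e = s((i, false), (i + 1, false)) ∨ e = s((i, true), (i + 1, true)))} ∪
      {e | ∃ i : ℕ, i < n ∧ e = s((i, false), (i, true))})
    -- the edge coloring of `G`
    (col : Sym2 (ℕ × Bool) → C)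
    (hcol : ∀ e : Sym2 (ℕ × Bool),
      (∀ i : ℕ, i + 1 < n → e = s((i, false), (i + 1, false)) → col e = c i) ∧
      ((¬ ∃ i : ℕ, i + 1 < n ∧ e = s((i, false), (i + 1, false))) → col e = cstar)) :
    (∃ M : Finset (Sym2 (ℕ × Bool)), ↑M ⊆ EG ∧
        (∀ e ∈ M, ∀ f ∈ M, e ≠ f → ∀ x : ℕ × Bool, x ∈ e → x ∉ f) ∧
        (∀ i : ℕ, i < n → ∀ b : Bool, ∃ e ∈ M, ((i, b) : ℕ × Bool) ∈ e) ∧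
        k + 1 ≤ (M.image col).card) ↔
    (∃ S : Finset ℕ, (∀ i ∈ S, i + 1 < n) ∧
        (∀ i ∈ S, ∀ j ∈ S, i ≠ j → i + 1 ≠ j ∧ j + 1 ≠ i) ∧
        S.card = k ∧ Set.InjOn c ↑S) := by
  classical
  constructor
  · rintro ⟨M, hsub, hdisj, hcov, hcard⟩
    set S₀ : Finset ℕ := M.sup (fun e =>
      if h : ∃ i, i + 1 < n ∧ e = s(((i : ℕ), false), (i + 1, false)) then {h.choose} else ∅)
      with hS₀def
    have hS₀mem : ∀ i ∈ S₀, i + 1 < n ∧ s(((i : ℕ), false), (i + 1, false)) ∈ M := by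
      intro i hi
      rw [hS₀def, Finset.mem_sup] at hi
      obtain ⟨e, he, hie⟩ := hi
      split_ifs at hie with h
      · obtain ⟨h1, h2⟩ := h.choose_spec
        rw [Finset.mem_singleton] at hie
        subst hie
        exact ⟨h1, h2 ▸ he⟩
      · simp at hie
    have hS₀mem' : ∀ i, i + 1 < n → s(((i : ℕ), false), (i + 1, false)) ∈ M → i ∈ S₀ := by
      intro i h1 h2
      rw [hS₀def, Finset.mem_sup]
      refine ⟨s(((i : ℕ), false), (i + 1, false)), h2, ?_⟩
      have h : ∃ j, j + 1 < n ∧ s(((i : ℕ), false), (i + 1, false)) =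
          s(((j : ℕ), false), (j + 1, false)) := ⟨i, h1, rfl⟩
      rw [dif_pos h, Finset.mem_singleton]
      obtain ⟨-, hspec⟩ := h.choose_spec
      have h3 := Sym2.eq_iff.mp hspec
      simp only [Prod.mk.injEq, and_true] at h3
      omega
    have himg : M.image col ⊆ insert cstar (S₀.image c) := by
      intro b hb
      obtain ⟨e, he, rfl⟩ := Finset.mem_image.mp hb
      by_cases hP : ∃ i, i + 1 < n ∧ e = s(((i : ℕ), false), (i + 1, false))
      · obtain ⟨i, hi, rfl⟩ := hP
        rw [(hcol _).1 i hi rfl]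
        exact Finset.mem_insert_of_mem (Finset.mem_image_of_mem _ (hS₀mem' i hi he))
      · rw [(hcol e).2 hP]; exact Finset.mem_insert_self _ _
    have hk : k ≤ (S₀.image c).card := by
      have h1 := Finset.card_le_card himg
      have h2 := Finset.card_insert_le cstar (S₀.image c)
      omega
    obtain ⟨S, hSsub, hScard, hSinj⟩ := rep_lemma c S₀ k hk
    refine ⟨S, fun i hi => (hS₀mem i (hSsub hi)).1, ?_, hScard, hSinj⟩
    intro i hi j hj hij
    have hiM := (hS₀mem i (hSsub hi)).2
    have hjM := (hS₀mem j (hSsub hj)).2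
    have hne : s(((i : ℕ), false), (i + 1, false)) ≠ s(((j : ℕ), false), (j + 1, false)) := by
      simp [Sym2.eq_iff, Prod.ext_iff]; omega
    constructor
    · intro h
      exact hdisj _ hiM _ hjM hne (i + 1, false) (by simp)
        (by simp [Sym2.mem_iff, Prod.ext_iff]; omega)
    · intro h
      exact hdisj _ hiM _ hjM hne (i, false) (by simp)
        (by simp [Sym2.mem_iff, Prod.ext_iff]; omega)
  · rintro ⟨S, hS1, hS2, hScard, hSinj⟩
    let A : Finset (Sym2 (ℕ × Bool)) :=
      S.image (fun i => s(((i : ℕ), false), (i + 1, false)))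
    let B : Finset (Sym2 (ℕ × Bool)) :=
      S.image (fun i => s(((i : ℕ), true), (i + 1, true)))
    let R : Finset ℕ := (Finset.range n) \ (S ∪ S.image (fun j => j + 1))
    let D : Finset (Sym2 (ℕ × Bool)) :=
      R.image (fun i => s(((i : ℕ), false), (i, true)))
    have hRmem : ∀ i, i ∈ R ↔ i < n ∧ i ∉ S ∧ ∀ j ∈ S, j + 1 ≠ i := by
      intro i
      simp only [R, Finset.mem_sdiff, Finset.mem_range, Finset.mem_union, Finset.mem_image,
        not_or, not_exists, not_and]
    refine ⟨A ∪ B ∪ D, ?_, ?_, ?_, ?_⟩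
    · -- subset of EG
      intro e he
      rw [hEG]
      simp only [Finset.mem_coe, Finset.mem_union] at he
      rcases he with (he | he) | he
      · obtain ⟨i, hi, rfl⟩ := Finset.mem_image.mp he
        exact Or.inl ⟨i, hS1 i hi, Or.inl rfl⟩
      · obtain ⟨i, hi, rfl⟩ := Finset.mem_image.mp he
        exact Or.inl ⟨i, hS1 i hi, Or.inr rfl⟩
      · obtain ⟨i, hi, rfl⟩ := Finset.mem_image.mp he
        exact Or.inr ⟨i, ((hRmem i).mp hi).1, rfl⟩
    · -- pairwise disjoint
      intro e he f hf hef x hx hxf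
      simp only [Finset.mem_union] at he hf
      rcases he with (he | he) | he <;> rcases hf with (hf | hf) | hf <;>
        obtain ⟨i, hi, rfl⟩ := Finset.mem_image.mp he <;>
        obtain ⟨j, hj, rfl⟩ := Finset.mem_image.mp hf
      · have hij : i ≠ j := by rintro rfl; exact hef rfl
        exact Lpp hx hxf (fun _ => ⟨hij, (hS2 i hi j hj hij).1, (hS2 i hi j hj hij).2⟩)
      · exact Lpp hx hxf (by simp)
      · obtain ⟨-, hj1, hj2⟩ := (hRmem j).mp hj
        exact Lpr hx hxf (fun h => hj1 (h ▸ hi)) (fun h => hj2 i hi h.symm)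
      · exact Lpp hx hxf (by simp)
      · have hij : i ≠ j := by rintro rfl; exact hef rfl
        exact Lpp hx hxf (fun _ => ⟨hij, (hS2 i hi j hj hij).1, (hS2 i hi j hj hij).2⟩)
      · obtain ⟨-, hj1, hj2⟩ := (hRmem j).mp hj
        exact Lpr hx hxf (fun h => hj1 (h ▸ hi)) (fun h => hj2 i hi h.symm)
      · obtain ⟨-, hi1, hi2⟩ := (hRmem i).mp hi
        exact Lpr hxf hx (fun h => hi1 (h ▸ hj)) (fun h => hi2 j hj h.symm)
      · obtain ⟨-, hi1, hi2⟩ := (hRmem i).mp hi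
        exact Lpr hxf hx (fun h => hi1 (h ▸ hj)) (fun h => hi2 j hj h.symm)
      · have hij : i ≠ j := by rintro rfl; exact hef rfl
        exact Lrr hx hxf hij
    · -- coverage
      intro i hi b
      by_cases hiS : i ∈ S
      · cases b
        · exact ⟨s(((i : ℕ), false), (i + 1, false)),
            Finset.mem_union_left _ (Finset.mem_union_left _ (Finset.mem_image_of_mem _ hiS)),
            by simp⟩
        · exact ⟨s(((i : ℕ), true), (i + 1, true)),
            Finset.mem_union_left _ (Finset.mem_union_right _ (Finset.mem_image_of_mem _ hiS)),
            by simp⟩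
      · by_cases hiS' : ∃ j ∈ S, j + 1 = i
        · obtain ⟨j, hj, rfl⟩ := hiS'
          cases b
          · exact ⟨s(((j : ℕ), false), (j + 1, false)),
              Finset.mem_union_left _ (Finset.mem_union_left _ (Finset.mem_image_of_mem _ hj)),
              by simp⟩
          · exact ⟨s(((j : ℕ), true), (j + 1, true)),
              Finset.mem_union_left _ (Finset.mem_union_right _ (Finset.mem_image_of_mem _ hj)),
              by simp⟩
        · have hiR : i ∈ R := (hRmem i).mpr
            ⟨hi, hiS, fun j hj hji => hiS' ⟨j, hj, hji⟩⟩
          exact ⟨s(((i : ℕ), false), (i, true)),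
            Finset.mem_union_right _ (Finset.mem_image_of_mem _ hiR),
            by cases b <;> simp⟩
    · -- color count
      have hcA : ∀ i ∈ S, col s(((i : ℕ), false), (i + 1, false)) = c i := by
        intro i hi
        exact (hcol _).1 i (hS1 i hi) rfl
      have hcstar : cstar ∈ (A ∪ B ∪ D).image col := by
        rcases S.eq_empty_or_nonempty with hSe | ⟨i, hi⟩
        · have h0R : 0 ∈ R := (hRmem 0).mpr ⟨hn, by simp [hSe], by simp [hSe]⟩
          refine Finset.mem_image.mpr ⟨s(((0 : ℕ), false), (0, true)),
            Finset.mem_union_right _ (Finset.mem_image_of_mem _ h0R), ?_⟩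
          apply (hcol _).2
          rintro ⟨j, -, hj⟩
          simp [Sym2.eq_iff, Prod.ext_iff] at hj
        · refine Finset.mem_image.mpr ⟨s(((i : ℕ), true), (i + 1, true)),
            Finset.mem_union_left _ (Finset.mem_union_right _ (Finset.mem_image_of_mem _ hi)), ?_⟩
          apply (hcol _).2
          rintro ⟨j, -, hj⟩
          simp [Sym2.eq_iff, Prod.ext_iff] at hj
      have hsubcol : insert cstar (S.image c) ⊆ (A ∪ B ∪ D).image col := by
        intro b hb
        rcases Finset.mem_insert.mp hb with rfl | hb
        · exact hcstar
        · obtain ⟨i, hi, rfl⟩ := Finset.mem_image.mp hb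
          exact Finset.mem_image.mpr ⟨s(((i : ℕ), false), (i + 1, false)),
            Finset.mem_union_left _ (Finset.mem_union_left _ (Finset.mem_image_of_mem _ hi)),
            hcA i hi⟩
      have hnotmem : cstar ∉ S.image c := by
        intro h
        obtain ⟨i, hi, hci⟩ := Finset.mem_image.mp h
        exact hfresh i (hS1 i hi) hci
      have hcardins : (insert cstar (S.image c)).card = k + 1 := by
        rw [Finset.card_insert_of_notMem hnotmem, Finset.card_image_of_injOn hSinj, hScard]
      calc k + 1 = (insert cstar (S.image c)).card := hcardins.symm
        _ ≤ _ := Finset.card_le_card hsubcol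
end

section
/- For all integers 1 ≤ k ≤ t ≤ n, the family of vectors obtained as follows is an (n,k,t)-splitter of size C(n+t-2, t-1): for each nondecreasing tuple (i_1 ≤ i_2 ≤ … ≤ i_{t−1}) with entries in [n], assign to each element j ∈ [n] the color |{ℓ : i_ℓ ≤ j}| + 1. That is, for every index set I ⊆ [n] with |I| = k, some vector in the family partitions I into color classes whose sizes pairwise differ by at most 1. -/
/-!
Every element of `I` can get a color of its own: with `I = {a₀ < ⋯ < a_{k-1}}`, the tuple
`(a₁, a₂, …, a_{k-1}, a_{k-1}, …)` puts a threshold between any two consecutive elements of `I`,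
so the color `j ↦ |{ℓ : v ℓ ≤ j}| + 1` is strictly increasing on `I` and every color class
meets `I` in at most one element. The size of the family is the number of multisets of size
`t - 1` over `[n]`.
-/

open Finset

lemma List.ofFn_get_cast {α : Type*} (l : List α) {m : ℕ} (h : m = l.length) :
    List.ofFn (fun i : Fin m => l.get (Fin.cast h i)) = l := by
  subst h
  exact List.ofFn_get l

def monotoneFinEquivSym (n m : ℕ) : {v : Fin m → Fin n // Monotone v} ≃ Sym (Fin n) m where
  toFun v := ⟨(List.ofFn v.1 : List (Fin n)), by simp⟩
  invFun s := ⟨fun i => (Multiset.sort s.1 (· ≤ ·)).get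
      (Fin.cast (by rw [Multiset.length_sort, s.2]) i),
    fun i j hij => (Multiset.pairwise_sort s.1 (· ≤ ·)).rel_get_of_le (R := (· ≤ ·)) (by exact hij)⟩
  left_inv v := by
    have hs : Multiset.sort (↑(List.ofFn v.1) : Multiset (Fin n)) (· ≤ ·) = List.ofFn v.1 :=
      List.Perm.eq_of_pairwise' (Multiset.pairwise_sort _ _)
        (List.pairwise_ofFn.mpr fun i j h => v.2 h.le)
        (Multiset.coe_eq_coe.mp (Multiset.sort_eq _ _))
    ext i
    simp only [List.get_of_eq hs, List.get_ofFn]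
    rfl
  right_inv s := Subtype.ext <| by
    simp only [List.ofFn_get_cast]
    exact Multiset.sort_eq _ _

theorem Nat.card_monotone_fin (n m : ℕ) :
    Nat.card {v : Fin m → Fin n // Monotone v} = (n + m - 1).choose m := by
  rw [Nat.card_congr (monotoneFinEquivSym n m), Nat.card_eq_fintype_card,
    Sym.card_sym_eq_choose, Fintype.card_fin]

section Thresholds

variable {ι α : Type*} [Fintype ι] [LinearOrder α]

/-- The number of thresholds `v ℓ` at or below `j`; the paper's color of `j` is this plus one. -/
def thresholdCount (v : ι → α) (j : α) : ℕ := #{ℓ | v ℓ ≤ j}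

theorem thresholdCount_lt {v : ι → α} {a b : α} (ℓ : ι) (ha : a < v ℓ) (hb : v ℓ ≤ b) :
    thresholdCount v a < thresholdCount v b := by
  refine card_lt_card ⟨monotone_filter_right _ fun _ _ hi => hi.trans (ha.le.trans hb), ?_⟩
  intro hsub
  have := hsub (mem_filter.mpr ⟨mem_univ ℓ, hb⟩)
  exact (mem_filter.mp this).2.not_gt ha

theorem injOn_thresholdCount {v : ι → α} {I : Set α}
    (hsep : ∀ a ∈ I, ∀ b ∈ I, a < b → ∃ ℓ, a < v ℓ ∧ v ℓ ≤ b) :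
    Set.InjOn (thresholdCount v) I :=
  StrictMonoOn.injOn fun a ha b hb hab =>
    let ⟨ℓ, haℓ, hℓb⟩ := hsep a ha b hb hab
    thresholdCount_lt ℓ haℓ hℓb

end Thresholds

theorem Finset.card_filter_eq_le_one_of_injOn {α β : Type*} [DecidableEq β] {f : α → β}
    {I : Finset α} (hf : Set.InjOn f I) (c : β) : #{j ∈ I | f j = c} ≤ 1 :=
  card_le_one.mpr fun _ ha _ hb => by
    rw [mem_filter] at ha hb
    exact hf ha.1 hb.1 (ha.2.trans hb.2.symm)

/-- The thresholds `a₁, …, a_{k-1}, a_{k-1}, …` for `I = {a₀ < ⋯ < a_{k-1}}`. -/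
def Finset.separatingThresholds {α : Type*} [LinearOrder α] (I : Finset α) {k : ℕ}
    (hI : #I = k) (m : ℕ) (hk : 1 ≤ k) : Fin m → α :=
  fun ℓ => I.orderEmbOfFin hI ⟨min (ℓ + 1) (k - 1), by omega⟩

namespace Finset.separatingThresholds

variable {α : Type*} [LinearOrder α] (I : Finset α) {k : ℕ} (hI : #I = k) (m : ℕ) (hk : 1 ≤ k)

theorem monotone : Monotone (I.separatingThresholds hI m hk) := fun ℓ ℓ' h =>
  (I.orderEmbOfFin hI).monotone <| Fin.mk_le_mk.mpr <| by
    have : (ℓ : ℕ) ≤ ℓ' := h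
    omega

theorem separates (hkm : k ≤ m + 1) :
    ∀ a ∈ I, ∀ b ∈ I, a < b → ∃ ℓ, a < I.separatingThresholds hI m hk ℓ ∧
      I.separatingThresholds hI m hk ℓ ≤ b := by
  set e := I.orderEmbOfFin hI
  intro a ha b hb hab
  obtain ⟨i, rfl⟩ : ∃ i, e i = a := by rwa [← Set.mem_range, range_orderEmbOfFin]
  obtain ⟨i', rfl⟩ : ∃ i', e i' = b := by rwa [← Set.mem_range, range_orderEmbOfFin]
  have hii' : (i : ℕ) < i' := e.lt_iff_lt.mp hab
  have hi' := i'.isLt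
  refine ⟨⟨i, by omega⟩, e.strictMono ?_, e.monotone ?_⟩
  · simp only [Fin.lt_def]
    omega
  · simp only [Fin.le_def]
    omega

end Finset.separatingThresholds

theorem stmt_18_general (n k t : ℕ) (hk : 1 ≤ k) (hkt : k ≤ t) :
    Nat.card {v : Fin (t - 1) → Fin n // Monotone v} = (n + t - 2).choose (t - 1) ∧
    ∀ I : Finset (Fin n), I.card = k →
      ∃ v : Fin (t - 1) → Fin n, Monotone v ∧
        ∀ q ∈ Finset.Icc 1 t, ∀ q' ∈ Finset.Icc 1 t,
          (I.filter fun j => (Finset.univ.filter fun ℓ => v ℓ ≤ j).card + 1 = q).card ≤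
          (I.filter fun j => (Finset.univ.filter fun ℓ => v ℓ ≤ j).card + 1 = q').card + 1 := by
  refine ⟨by rw [Nat.card_monotone_fin]; congr 1; omega, fun I hI => ?_⟩
  have hkm : k ≤ t - 1 + 1 := by omega
  refine ⟨I.separatingThresholds hI (t - 1) hk,
    separatingThresholds.monotone I hI (t - 1) hk, fun q _ q' _ => ?_⟩
  have hinj := (add_left_injective 1).comp_injOn
    (injOn_thresholdCount (separatingThresholds.separates I hI (t - 1) hk hkm))
  exact (card_filter_eq_le_one_of_injOn hinj q).trans le_add_self

/-- The family of colorings of `[n]` by colors `1,…,t` obtained from nondecreasing tuples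
`(i_1 ≤ … ≤ i_{t-1})` over `[n]`, assigning to `j` the color `|{ℓ : i_ℓ ≤ j}| + 1`, has
size `C(n+t-2, t-1)` and is an `(n,k,t)`-splitter: for every `I` with `|I| = k`, some such
coloring partitions `I` into color classes whose sizes pairwise differ by at most `1`. -/
theorem stmt_18 (n k t : ℕ) (hk : 1 ≤ k) (hkt : k ≤ t) (htn : t ≤ n) :
    Nat.card {v : Fin (t - 1) → Fin n // Monotone v} = (n + t - 2).choose (t - 1) ∧
    ∀ I : Finset (Fin n), I.card = k →
      ∃ v : Fin (t - 1) → Fin n, Monotone v ∧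
        ∀ q ∈ Finset.Icc 1 t, ∀ q' ∈ Finset.Icc 1 t,
          (I.filter fun j => (Finset.univ.filter fun ℓ => v ℓ ≤ j).card + 1 = q).card ≤
          (I.filter fun j => (Finset.univ.filter fun ℓ => v ℓ ≤ j).card + 1 = q').card + 1 :=
  stmt_18_general n k t hk hkt
end
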